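/- For every n ≥ 1, there is a bijection between the set of ordered set partitions of {1,…,n} and the set of standard composite set partitions of {1,…,n}; in particular these two finite sets have the same cardinality. -/

import Mathlib

open scoped Pointwise Classical

namespace PlatesPaper

/-- The union of a list of finite sets. -/
def lUnion {n : ℕ} (L : List (Finset (Fin n))) : Finset (Fin n) :=
  L.foldr (· ∪ ·) ∅

/-- `L` is an ordered set partition of `J`: a list of pairwise disjoint nonempty
finite sets whose union is `J`. -/
def IsOSP {n : ℕ} (J : Finset (Fin n)) (L : List (Finset (Fin n))) : Prop :=
  (∀ B ∈ L, B.Nonempty) ∧ L.Pairwise Disjoint ∧ lUnion L = J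

/-- The plate of an ordered set partition `L` (of a subset `J = lUnion L` of `{1,…,n}`):
the set of `x ∈ V₀ⁿ` vanishing outside `J`, with `x_J = 0`, and such that the partial
sums over the unions of the first `i` blocks are nonnegative for `i = 1,…,len(L)−1`.
(For an ordered set partition of the whole of `{1,…,n}` the first two conditions are
equivalent to `x ∈ V₀ⁿ`.) -/
def plate {n : ℕ} (L : List (Finset (Fin n))) : Set (Fin n → ℝ) :=
  {x | (∑ i, x i = 0) ∧ (∀ j, j ∉ lUnion L → x j = 0) ∧ (∑ j ∈ lUnion L, x j = 0) ∧
    ∀ i : ℕ, 0 < i → i < L.length → 0 ≤ ∑ j ∈ lUnion (L.take i), x j}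

/-- `ℚ`-valued indicator function of a set of points of `ℝⁿ`. -/
noncomputable def ind {n : ℕ} (S : Set (Fin n → ℝ)) : (Fin n → ℝ) → ℚ :=
  fun x => if x ∈ S then 1 else 0

/-- The index of the block of `L` containing the element `a`. -/
def blockIdx {n : ℕ} (L : List (Finset (Fin n))) (a : Fin n) : ℕ :=
  L.findIdx fun B => decide (a ∈ B)

/-- The index of the block of `L` containing the set `B`. -/
def subIdx {n : ℕ} (L : List (Finset (Fin n))) (B : Finset (Fin n)) : ℕ :=
  L.findIdx fun C => decide (B ⊆ C)

/-- `B` is contained in one of the blocks of `L`. -/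
def memBlock {n : ℕ} (L : List (Finset (Fin n))) (B : Finset (Fin n)) : Prop :=
  ∃ j < L.length, B ⊆ L.getD j ∅

/-- `F` is a standard composite set partition of `{1,…,n}`: an (unordered, finite)
collection of ordered set partitions of pairwise disjoint nonempty subsets of `{1,…,n}`
whose union is `{1,…,n}`, such that the first block of each member contains the minimum
of its underlying set. -/
def IsStdCSP (n : ℕ) (F : Finset (List (Finset (Fin n)))) : Prop :=
  (∀ M ∈ F, IsOSP (lUnion M) M ∧ M ≠ []) ∧
  ((F : Set (List (Finset (Fin n)))).Pairwise fun M M' => Disjoint (lUnion M) (lUnion M')) ∧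
  F.sup lUnion = Finset.univ ∧
  (∀ M ∈ F, ∃ b ∈ M.headD ∅, ∀ a ∈ lUnion M, b ≤ a)

/-!
Cutting an ordered set partition before each block whose minimum is a new record low among the
block minima splits it into segments, each of which has its minimum in its first block; the minima
of the segments strictly decrease. Conversely, concatenating the members of a standard composite
set partition in order of decreasing minimum gives an ordered set partition whose segments are
exactly those members, so the two maps are mutually inverse.
-/

section Components

variable {n : ℕ}

theorem lUnion_nil : lUnion ([] : List (Finset (Fin n))) = ∅ := rfl

theorem lUnion_cons (B : Finset (Fin n)) (L : List (Finset (Fin n))) :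
    lUnion (B :: L) = B ∪ lUnion L := rfl

theorem lUnion_append (L₁ L₂ : List (Finset (Fin n))) :
    lUnion (L₁ ++ L₂) = lUnion L₁ ∪ lUnion L₂ := by
  induction L₁ with
  | nil => simp [lUnion_nil]
  | cons B L ih => simp [lUnion_cons, ih, Finset.union_assoc]

theorem mem_lUnion {a : Fin n} {L : List (Finset (Fin n))} : a ∈ lUnion L ↔ ∃ B ∈ L, a ∈ B := by
  induction L with
  | nil => simp [lUnion_nil]
  | cons B L ih => simp [lUnion_cons, ih]

theorem subset_lUnion {B : Finset (Fin n)} {L : List (Finset (Fin n))} (h : B ∈ L) :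
    B ⊆ lUnion L :=
  fun _ ha => mem_lUnion.mpr ⟨B, h, ha⟩

theorem lUnion_flatten (Ls : List (List (Finset (Fin n)))) :
    lUnion Ls.flatten = Ls.toFinset.sup lUnion := by
  induction Ls with
  | nil => rfl
  | cons L Ls ih => simp [lUnion_append, ih]

def lMin (L : List (Finset (Fin n))) : WithTop (Fin n) := (lUnion L).min

def HeadHasMin (L : List (Finset (Fin n))) : Prop :=
  ∃ b ∈ L.headD ∅, ∀ a ∈ lUnion L, b ≤ a

theorem headHasMin_iff {L : List (Finset (Fin n))} :
    HeadHasMin L ↔ ∃ B T, L = B :: T ∧ B.Nonempty ∧ lMin L = B.min := by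
  constructor
  · rintro ⟨b, hb, hle⟩
    obtain ⟨B, T, rfl⟩ : ∃ B T, L = B :: T := by
      cases L with
      | nil => simp at hb
      | cons B T => exact ⟨B, T, rfl⟩
    refine ⟨B, T, rfl, ⟨b, hb⟩, le_antisymm (Finset.min_mono Finset.subset_union_left) ?_⟩
    exact Finset.le_min fun a ha => (Finset.min_le hb).trans (WithTop.coe_le_coe.mpr (hle a ha))
  · rintro ⟨B, T, rfl, hB, hmin⟩
    refine ⟨B.min' hB, B.min'_mem hB, fun a ha => WithTop.coe_le_coe.mp ?_⟩
    rw [Finset.coe_min', ← hmin]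
    exact Finset.min_le ha

/-- Cuts an ordered set partition before every block whose minimum is smaller than the minima
of all earlier blocks; the resulting segments are listed by decreasing `lMin`. -/
def components : List (Finset (Fin n)) → List (List (Finset (Fin n)))
  | [] => []
  | B :: T =>
      (B :: ((components T).takeWhile fun C => decide (B.min ≤ lMin C)).flatten) ::
        (components T).dropWhile fun C => decide (B.min ≤ lMin C)

theorem flatten_components : ∀ L : List (Finset (Fin n)), (components L).flatten = L
  | [] => rfl
  | B :: T => by
    rw [components, List.flatten_cons, List.cons_append, ← List.flatten_append,
      List.takeWhile_append_dropWhile, flatten_components T]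

theorem lUnion_subset_of_mem_components {L C : List (Finset (Fin n))} (hC : C ∈ components L) :
    lUnion C ⊆ lUnion L := by
  rw [← flatten_components L, lUnion_flatten]
  exact Finset.le_sup (List.mem_toFinset.mpr hC)

theorem lMin_cons_flatten {B : Finset (Fin n)} {Cs : List (List (Finset (Fin n)))}
    (h : ∀ C ∈ Cs, B.min ≤ lMin C) : lMin (B :: Cs.flatten) = B.min := by
  refine le_antisymm (Finset.min_mono Finset.subset_union_left) (Finset.le_min fun a ha => ?_)
  rw [lUnion_cons, Finset.mem_union] at ha
  rcases ha with ha | ha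
  · exact Finset.min_le ha
  · obtain ⟨C, hC, haC⟩ : ∃ C ∈ Cs, a ∈ lUnion C := by
      rw [lUnion_flatten, Finset.mem_sup] at ha
      simpa using ha
    exact (h C hC).trans (Finset.min_le haC)

theorem _root_.List.lt_of_mem_dropWhile {α β : Type*} [LinearOrder β] {f : α → β} {b : β}
    {l : List α} (hl : l.Pairwise fun x y => f y < f x) {y : α}
    (hy : y ∈ l.dropWhile fun x => decide (b ≤ f x)) : f y < b := by
  induction l with
  | nil => simp at hy
  | cons x l ih =>
    rw [List.pairwise_cons] at hl
    by_cases hx : b ≤ f x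
    · rw [List.dropWhile_cons_of_pos (by simpa using hx)] at hy
      exact ih hl.2 hy
    · rw [List.dropWhile_cons_of_neg (by simpa using hx)] at hy
      rcases List.mem_cons.mp hy with rfl | hy
      · exact not_le.mp hx
      · exact (hl.1 y hy).trans (not_le.mp hx)

theorem exists_cons_of_mem_components {L C : List (Finset (Fin n))} (hC : C ∈ components L) :
    ∃ B T, C = B :: T ∧ lMin C = B.min := by
  induction L with
  | nil => simp [components] at hC
  | cons B T ih =>
    rw [components, List.mem_cons] at hC
    rcases hC with rfl | hC
    · exact ⟨_, _, rfl, lMin_cons_flatten fun C hC => by simpa using List.mem_takeWhile_imp hC⟩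
    · exact ih ((List.dropWhile_sublist _).subset hC)

theorem components_pairwise (L : List (Finset (Fin n))) :
    (components L).Pairwise fun C D => lMin D < lMin C := by
  induction L with
  | nil => exact List.Pairwise.nil
  | cons B T ih =>
    rw [components, List.pairwise_cons, lMin_cons_flatten fun C hC => by
      simpa using List.mem_takeWhile_imp hC]
    exact ⟨fun D hD => List.lt_of_mem_dropWhile ih hD, ih.sublist (List.dropWhile_sublist _)⟩


theorem _root_.List.takeWhile_append_of_forall_not {α : Type*} {p : α → Bool} {xs ys : List α}
    (h : ∀ y ∈ ys, p y = false) : (xs ++ ys).takeWhile p = xs.takeWhile p := by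
  induction xs with
  | nil =>
    cases ys with
    | nil => rfl
    | cons y ys => simp [h y List.mem_cons_self]
  | cons x xs ih => cases hx : p x <;> simp [hx, ih]

theorem _root_.List.dropWhile_append_of_forall_not {α : Type*} {p : α → Bool} {xs ys : List α}
    (h : ∀ y ∈ ys, p y = false) : (xs ++ ys).dropWhile p = xs.dropWhile p ++ ys := by
  induction xs with
  | nil =>
    cases ys with
    | nil => rfl
    | cons y ys => simp [h y List.mem_cons_self]
  | cons x xs ih => cases hx : p x <;> simp [hx, ih]

theorem components_eq_singleton {M : List (Finset (Fin n))} (hM : HeadHasMin M) :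
    components M = [M] := by
  obtain ⟨B, T, rfl, -, hmin⟩ := headHasMin_iff.mp hM
  have hle : ∀ C ∈ components T, B.min ≤ lMin C := fun C hC =>
    hmin ▸ Finset.min_mono ((lUnion_subset_of_mem_components hC).trans Finset.subset_union_right)
  rw [components, List.takeWhile_eq_self_iff.mpr (by simpa using hle),
    List.dropWhile_eq_nil_iff.mpr (by simpa using hle), flatten_components]

theorem components_append {M L : List (Finset (Fin n))}
    (h : ∀ C ∈ components L, lMin C < lMin M) :
    components (M ++ L) = components M ++ components L := by
  induction M with
  | nil => rfl
  | cons B M ih =>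
    have hB : ∀ C ∈ components L, lMin C < B.min := fun C hC =>
      (h C hC).trans_le (Finset.min_mono Finset.subset_union_left)
    have hM : ∀ C ∈ components L, lMin C < lMin M := fun C hC =>
      (h C hC).trans_le (Finset.min_mono Finset.subset_union_right)
    have hp : ∀ C ∈ components L, decide (B.min ≤ lMin C) = false := by
      simpa using hB
    rw [List.cons_append, components, ih hM, List.takeWhile_append_of_forall_not hp,
      List.dropWhile_append_of_forall_not hp, components, List.cons_append]

theorem disjoint_lUnion {C D : List (Finset (Fin n))}
    (h : ∀ B ∈ C, ∀ B' ∈ D, Disjoint B B') : Disjoint (lUnion C) (lUnion D) := by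
  refine Finset.disjoint_left.mpr fun a haC haD => ?_
  obtain ⟨B, hB, haB⟩ := mem_lUnion.mp haC
  obtain ⟨B', hB', haB'⟩ := mem_lUnion.mp haD
  exact Finset.disjoint_left.mp (h B hB B' hB') haB haB'

theorem isStdCSP_components {L : List (Finset (Fin n))} (hL : IsOSP Finset.univ L) :
    IsStdCSP n (components L).toFinset := by
  obtain ⟨hne, hdisj, hU⟩ := hL
  rw [← flatten_components L, List.pairwise_flatten] at hdisj
  obtain ⟨hdisj_in, hdisj_across⟩ := hdisj
  have hne' : ∀ C ∈ components L, ∀ B ∈ C, B.Nonempty := fun C hC B hB =>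
    hne B (flatten_components L ▸ List.mem_flatten_of_mem hC hB)
  have : Std.Symm fun C D : List (Finset (Fin n)) => Disjoint (lUnion C) (lUnion D) :=
    ⟨fun _ _ h => h.symm⟩
  simp only [IsStdCSP, List.mem_toFinset, List.coe_toFinset]
  refine ⟨fun C hC => ⟨⟨hne' C hC, hdisj_in C hC, rfl⟩, ?_⟩, ?_, ?_, fun C hC => ?_⟩
  · obtain ⟨B, T, rfl, -⟩ := exists_cons_of_mem_components hC
    exact List.cons_ne_nil B T
  · exact fun C hC D hD hCD => ((hdisj_across.imp disjoint_lUnion).forall hC hD hCD)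
  · rw [← lUnion_flatten, flatten_components, hU]
  · obtain ⟨B, T, rfl, hmin⟩ := exists_cons_of_mem_components hC
    exact headHasMin_iff.mpr ⟨B, T, rfl, hne' _ hC B List.mem_cons_self, hmin⟩

theorem components_toFinset_injective :
    Function.Injective fun L : List (Finset (Fin n)) => (components L).toFinset := by
  intro L L' (h : (components L).toFinset = (components L').toFinset)
  have : Std.Irrefl fun C D : List (Finset (Fin n)) => lMin D < lMin C := ⟨fun _ => lt_irrefl _⟩
  have : Std.Antisymm fun C D : List (Finset (Fin n)) => lMin D < lMin C :=
    ⟨fun _ _ h h' => absurd h' h.asymm⟩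
  have hcomp : components L = components L' :=
    (components_pairwise L).eq_of_mem_iff (components_pairwise L') fun C => by
      rw [← List.mem_toFinset, h, List.mem_toFinset]
  simpa only [flatten_components] using congrArg List.flatten hcomp


theorem IsOSP.append {J J' : Finset (Fin n)} {L L' : List (Finset (Fin n))} (hL : IsOSP J L)
    (hL' : IsOSP J' L') (h : Disjoint J J') : IsOSP (J ∪ J') (L ++ L') := by
  obtain ⟨hne, hdisj, rfl⟩ := hL
  obtain ⟨hne', hdisj', rfl⟩ := hL'
  refine ⟨fun B hB => (List.mem_append.mp hB).elim (hne B) (hne' B), ?_, lUnion_append L L'⟩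
  exact List.pairwise_append.mpr
    ⟨hdisj, hdisj', fun B hB B' hB' => h.mono (subset_lUnion hB) (subset_lUnion hB')⟩

theorem HeadHasMin.lUnion_nonempty {L : List (Finset (Fin n))} (hL : HeadHasMin L) :
    (lUnion L).Nonempty := by
  obtain ⟨B, T, rfl, hB, -⟩ := headHasMin_iff.mp hL
  exact hB.mono Finset.subset_union_left

theorem lMin_ne_of_disjoint {C D : List (Finset (Fin n))} (hC : (lUnion C).Nonempty)
    (h : Disjoint (lUnion C) (lUnion D)) : lMin C ≠ lMin D := by
  intro hCD
  have hmin : lMin D = ↑((lUnion C).min' hC) := by rw [← hCD, lMin, Finset.coe_min']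
  exact Finset.disjoint_left.mp h ((lUnion C).min'_mem hC) (Finset.mem_of_min hmin)

theorem exists_isOSP_components_toFinset_eq (F : Finset (List (Finset (Fin n))))
    (hF : ∀ M ∈ F, IsOSP (lUnion M) M ∧ HeadHasMin M)
    (hdisj : (F : Set (List (Finset (Fin n)))).Pairwise fun M M' =>
      Disjoint (lUnion M) (lUnion M')) :
    ∃ L, IsOSP (F.sup lUnion) L ∧ (components L).toFinset = F := by
  induction F using Finset.strongInduction with
  | _ F ih => ?_
  rcases F.eq_empty_or_nonempty with rfl | hFne
  · exact ⟨[], ⟨by simp, List.Pairwise.nil, rfl⟩, rfl⟩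
  obtain ⟨M, hM, hmax⟩ := F.exists_max_image lMin hFne
  obtain ⟨L', hL', hL'F⟩ := ih (F.erase M) (Finset.erase_ssubset hM)
    (fun C hC => hF C (Finset.mem_of_mem_erase hC))
    (hdisj.mono (Finset.coe_subset.mpr (Finset.erase_subset M F)))
  have hdisj_erase : ∀ C ∈ F.erase M, Disjoint (lUnion C) (lUnion M) := fun C hC =>
    hdisj (Finset.mem_of_mem_erase hC) hM (Finset.ne_of_mem_erase hC)
  have hlt : ∀ C ∈ components L', lMin C < lMin M := by
    intro C hC
    rw [← List.mem_toFinset, hL'F] at hC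
    exact (hmax C (Finset.mem_of_mem_erase hC)).lt_of_ne
      (lMin_ne_of_disjoint (hF C (Finset.mem_of_mem_erase hC)).2.lUnion_nonempty
        (hdisj_erase C hC))
  refine ⟨M ++ L', ?_, ?_⟩
  · rw [← Finset.insert_erase hM, Finset.sup_insert, Finset.sup_eq_union]
    exact (hF M hM).1.append hL'
      (Finset.disjoint_sup_right.mpr fun C hC => (hdisj_erase C hC).symm)
  · rw [components_append hlt, components_eq_singleton (hF M hM).2, List.singleton_append,
      List.toFinset_cons, hL'F, Finset.insert_erase hM]

noncomputable def ospEquivStdCSP (n : ℕ) :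
    {L : List (Finset (Fin n)) // IsOSP Finset.univ L} ≃
      {F : Finset (List (Finset (Fin n))) // IsStdCSP n F} :=
  Equiv.ofBijective (fun L => ⟨(components L.1).toFinset, isStdCSP_components L.2⟩) <| by
    refine ⟨fun L L' h => Subtype.ext (components_toFinset_injective (congrArg Subtype.val h)), ?_⟩
    rintro ⟨F, hOSP, hdisj, hsup, hstd⟩
    obtain ⟨L, hL, hLF⟩ :=
      exists_isOSP_components_toFinset_eq F (fun M hM => ⟨(hOSP M hM).1, hstd M hM⟩) hdisj
    exact ⟨⟨L, hsup ▸ hL⟩, Subtype.ext hLF⟩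

end Components

theorem statement_7_general (n : ℕ) :
    Nonempty ({L : List (Finset (Fin n)) // IsOSP Finset.univ L} ≃
      {F : Finset (List (Finset (Fin n))) // IsStdCSP n F}) ∧
    Nat.card {L : List (Finset (Fin n)) // IsOSP Finset.univ L} =
      Nat.card {F : Finset (List (Finset (Fin n))) // IsStdCSP n F} :=
  ⟨⟨ospEquivStdCSP n⟩, Nat.card_congr (ospEquivStdCSP n)⟩

/-- For every `n ≥ 1` there is a bijection between the ordered set
partitions of `{1,…,n}` and the standard composite set partitions of `{1,…,n}`;
in particular these two finite sets have the same cardinality. -/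
theorem statement_7 (n : ℕ) (hn : 1 ≤ n) :
    Nonempty ({L : List (Finset (Fin n)) // IsOSP Finset.univ L} ≃
      {F : Finset (List (Finset (Fin n))) // IsStdCSP n F}) ∧
    Nat.card {L : List (Finset (Fin n)) // IsOSP Finset.univ L} =
      Nat.card {F : Finset (List (Finset (Fin n))) // IsStdCSP n F} :=
  statement_7_general n

end PlatesPaper
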